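/- The root system of type G_2, realized with simple roots α, β as Δ = ±{α, β, α+β, 2α+β, 3α+β, 3α+2β}, admits no partition into three or more nonempty parts Δ_1, …, Δ_m such that each Δ_i and each Δ_i ⊔ Δ_j is closed. -/

import Mathlib

/-!
Every part `Δᵢ` of such a partition is biclosed: besides `Δᵢ`, also `Δ \ Δᵢ` is closed, since a sum
of two roots outside `Δᵢ` lies in the union of their two parts. Listing the twelve roots of `G₂` by
angle, a nonempty biclosed set contains a long root, then one of the two short roots next to it, and
writing these and their neighbours as sums of two roots forces at least three more roots into the
set. Three disjoint sets of at least five roots do not fit into twelve roots.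
-/

/-- A subset `S` of a root system `Δ` is closed if `γ, δ ∈ S` and `γ + δ ∈ Δ`
imply `γ + δ ∈ S`. -/
def RootClosed (Δ S : Set (Fin 2 → ℤ)) : Prop :=
  ∀ a ∈ S, ∀ b ∈ S, a + b ∈ Δ → a + b ∈ S

/-- The root system of type `G₂` realized in `ℤ²` with short simple root `α = (1,0)`
and long simple root `β = (0,1)`: the 12 roots `±α, ±β, ±(α+β), ±(2α+β), ±(3α+β),
±(3α+2β)`. -/
def rootsG2 : Set (Fin 2 → ℤ) :=
  {v | ∃ a b : ℤ, ((a, b) = (1, 0) ∨ (a, b) = (0, 1) ∨ (a, b) = (1, 1) ∨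
        (a, b) = (2, 1) ∨ (a, b) = (3, 1) ∨ (a, b) = (3, 2) ∨
        (a, b) = (-1, 0) ∨ (a, b) = (0, -1) ∨ (a, b) = (-1, -1) ∨
        (a, b) = (-2, -1) ∨ (a, b) = (-3, -1) ∨ (a, b) = (-3, -2)) ∧
       v = ![a, b]}

def IsBiclosed (Δ S : Set (Fin 2 → ℤ)) : Prop :=
  RootClosed Δ S ∧ RootClosed Δ (Δ \ S)

theorem isBiclosed_of_iUnion_eq {ι : Type*} {Δ : Set (Fin 2 → ℤ)} {P : ι → Set (Fin 2 → ℤ)}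
    (hcov : ⋃ i, P i = Δ) (hdisj : Pairwise fun i j => Disjoint (P i) (P j))
    (hcl : ∀ i, RootClosed Δ (P i)) (hcl₂ : ∀ i j, i ≠ j → RootClosed Δ (P i ∪ P j)) (i : ι) :
    IsBiclosed Δ (P i) := by
  refine ⟨hcl i, fun a ha b hb hab => ⟨hab, fun habi => ?_⟩⟩
  obtain ⟨j, haj⟩ := Set.mem_iUnion.1 (hcov ▸ ha.1)
  obtain ⟨l, hbl⟩ := Set.mem_iUnion.1 (hcov ▸ hb.1)
  have hji : j ≠ i := by rintro rfl; exact ha.2 haj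
  have hli : l ≠ i := by rintro rfl; exact hb.2 hbl
  have hjl : a + b ∈ P j ∪ P l := by
    rcases eq_or_ne j l with rfl | hjl
    · exact Or.inl (hcl j a haj b hbl hab)
    · exact hcl₂ j l hjl a (Or.inl haj) b (Or.inr hbl) hab
  rcases hjl with h | h
  · exact Set.disjoint_left.1 (hdisj hji) h habi
  · exact Set.disjoint_left.1 (hdisj hli) h habi

theorem ZMod.even_or_odd {n : ℕ} [NeZero n] (k : ZMod n) : Even k ∨ Odd k := by
  simpa [ZMod.natCast_zmod_val] using
    (Nat.even_or_odd k.val).imp (·.natCast (α := ZMod n)) (·.natCast (R := ZMod n))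

/-- The roots of `G₂` in counterclockwise order, starting from `α`: the index counts multiples of
`30°`, short roots sit at even and long roots at odd indices. -/
def g2Root : ZMod 12 → Fin 2 → ℤ :=
  ![![1, 0], ![3, 1], ![2, 1], ![3, 2], ![1, 1], ![0, 1],
    ![-1, 0], ![-3, -1], ![-2, -1], ![-3, -2], ![-1, -1], ![0, -1]]

theorem g2Root_injective : Function.Injective g2Root := by decide

theorem range_g2Root : Set.range g2Root = rootsG2 := by
  ext v
  simp only [rootsG2, Set.mem_range, Set.mem_ofPred_eq]
  constructor
  · rintro ⟨k, rfl⟩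
    fin_cases k <;> exact ⟨_, _, by simp, rfl⟩
  · rintro ⟨a, b, hab, rfl⟩
    rcases hab with h | h | h | h | h | h | h | h | h | h | h | h <;>
      obtain ⟨rfl, rfl⟩ := Prod.mk.inj h
    exacts [⟨0, rfl⟩, ⟨5, rfl⟩, ⟨4, rfl⟩, ⟨2, rfl⟩, ⟨1, rfl⟩, ⟨3, rfl⟩,
      ⟨6, rfl⟩, ⟨11, rfl⟩, ⟨10, rfl⟩, ⟨8, rfl⟩, ⟨7, rfl⟩, ⟨9, rfl⟩]

theorem g2Root_mem (k : ZMod 12) : g2Root k ∈ rootsG2 := range_g2Root ▸ Set.mem_range_self k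

theorem finite_rootsG2 : rootsG2.Finite := range_g2Root ▸ Set.finite_range g2Root

theorem ncard_rootsG2 : rootsG2.ncard = 12 := by
  rw [← range_g2Root, Set.ncard_range_of_injective g2Root_injective, Nat.card_zmod]

theorem card_le_ncard_of_g2Root_mem {S : Set (Fin 2 → ℤ)} (hS : S ⊆ rootsG2) {k d : ZMod 12}
    (hd : IsUnit d) (A : Finset (ZMod 12)) (hA : ∀ a ∈ A, g2Root (k + a * d) ∈ S) :
    A.card ≤ S.ncard :=
  Set.ncard_coe_finset A ▸ Set.ncard_le_ncard_of_injOn _ hA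
    (g2Root_injective.comp ((add_right_injective k).comp hd.mul_left_injective)).injOn
    (finite_rootsG2.subset hS)

/- In angular terms: two roots `120°` apart add up to the root halfway between them, two short
roots `60°` apart add up to the long root between them, and a short root is the sum of the short
root `120°` and the long root `30°` away from it on opposite sides. -/
theorem g2Root_add_eq_of_eq_sub_two_mul {i j k d : ZMod 12} (hd : d = 1 ∨ d = -1)
    (hi : i = k - 2 * d) (hj : j = k + 2 * d) : g2Root i + g2Root j = g2Root k := by
  subst hi hj
  rcases hd with rfl | rfl
  · revert k; decide
  · rw [add_comm]; revert k; decide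

theorem g2Root_add_eq_of_odd {i j k d : ZMod 12} (hk : Odd k) (hd : d = 1 ∨ d = -1)
    (hi : i = k - d) (hj : j = k + d) : g2Root i + g2Root j = g2Root k := by
  obtain ⟨m, rfl⟩ := hk
  subst hi hj
  rcases hd with rfl | rfl
  · revert m; decide
  · rw [add_comm]; revert m; decide

theorem g2Root_add_eq_of_even {i j k d : ZMod 12} (hk : Even k) (hd : d = 1 ∨ d = -1)
    (hi : i = k - 4 * d) (hj : j = k + d) : g2Root i + g2Root j = g2Root k := by
  obtain ⟨m, rfl⟩ := hk
  subst hi hj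
  rcases hd with rfl | rfl <;> revert m <;> decide

namespace IsBiclosed

variable {S : Set (Fin 2 → ℤ)}

theorem g2Root_add_mem (hS : IsBiclosed rootsG2 S) {i j k : ZMod 12}
    (h : g2Root i + g2Root j = g2Root k) (hi : g2Root i ∈ S) (hj : g2Root j ∈ S) :
    g2Root k ∈ S :=
  h ▸ hS.1 _ hi _ hj (h ▸ g2Root_mem k)

theorem g2Root_mem_or_mem (hS : IsBiclosed rootsG2 S) {i j k : ZMod 12}
    (h : g2Root i + g2Root j = g2Root k) (hk : g2Root k ∈ S) : g2Root i ∈ S ∨ g2Root j ∈ S := by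
  by_contra! hij
  exact (hS.2 _ ⟨g2Root_mem i, hij.1⟩ _ ⟨g2Root_mem j, hij.2⟩ (h ▸ g2Root_mem k)).2 (h ▸ hk)

theorem exists_odd_g2Root_mem (hS : IsBiclosed rootsG2 S) {k : ZMod 12} (hk : g2Root k ∈ S) :
    ∃ l, Odd l ∧ g2Root l ∈ S := by
  rcases k.even_or_odd with hk_even | hk_odd
  · have hk₁ : Odd (k - 1) := hk_even.sub_odd odd_one
    rcases hS.g2Root_mem_or_mem (i := k - 4) (j := k + 1)
      (g2Root_add_eq_of_even hk_even (.inl rfl) (by ring) (by ring)) hk with h | h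
    · have h₂ : g2Root (k - 2) ∈ S :=
        hS.g2Root_add_mem (g2Root_add_eq_of_eq_sub_two_mul (.inl rfl) (by ring) (by ring)) h hk
      exact ⟨k - 1, hk₁,
        hS.g2Root_add_mem (g2Root_add_eq_of_odd hk₁ (.inl rfl) (by ring) (by ring)) h₂ hk⟩
    · exact ⟨k + 1, hk_even.add_one, h⟩
  · exact ⟨k, hk_odd, hk⟩

theorem five_le_ncard_of_odd (hS : IsBiclosed rootsG2 S) (hSΔ : S ⊆ rootsG2) {k d : ZMod 12}
    (hk : Odd k) (hd : d = 1 ∨ d = -1) (h₀ : g2Root k ∈ S) (h₁ : g2Root (k + d) ∈ S) :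
    5 ≤ S.ncard := by
  have hd_neg : -d = 1 ∨ -d = -1 := by rcases hd with rfl | rfl <;> decide
  have hd_odd : Odd d := hd.elim (· ▸ odd_one) (· ▸ odd_neg_one)
  have hk₁ : Even (k + d) := hk.add_odd hd_odd
  have hk₃ : Even (k + 3 * d) := hk.add_odd ((show Odd (3 : ZMod 12) from ⟨1, rfl⟩).mul hd_odd)
  have hkm₁ : Even (k - d) := hk.sub_odd hd_odd
  -- `A` lists the positions of five roots of `S`, counted from `k` in steps of `d`
  have five (A : Finset (ZMod 12)) (hA : A.card = 5) (h : ∀ a ∈ A, g2Root (k + a * d) ∈ S) :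
      5 ≤ S.ncard :=
    hA ▸ card_le_ncard_of_g2Root_mem hSΔ (by rcases hd with rfl | rfl <;> decide) A h
  have h_mid := hS.g2Root_mem_or_mem (i := k - 2 * d) (j := k + 2 * d)
    (g2Root_add_eq_of_eq_sub_two_mul hd rfl rfl) h₀
  have h_left := hS.g2Root_mem_or_mem (i := k - d) (j := k + 3 * d)
    (g2Root_add_eq_of_eq_sub_two_mul hd (by ring) (by ring)) h₁
  have h_right := hS.g2Root_mem_or_mem (i := k - 3 * d) (j := k + 2 * d)
    (g2Root_add_eq_of_even hk₁ hd (by ring) (by ring)) h₁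
  by_cases h₂ : g2Root (k + 2 * d) ∈ S
  · rcases h_left with hm₁ | h₃
    · rcases hS.g2Root_mem_or_mem (i := k + 3 * d) (j := k - 2 * d)
        (g2Root_add_eq_of_even hkm₁ hd_neg (by ring) (by ring)) hm₁ with h₃ | hm₂
      · exact five {-1, 0, 1, 2, 3} (by decide) (by simp [← sub_eq_add_neg, hm₁, h₀, h₁, h₂, h₃])
      · exact five {-2, -1, 0, 1, 2} (by decide)
          (by simp [← sub_eq_add_neg, hm₂, hm₁, h₀, h₁, h₂])
    · rcases hS.g2Root_mem_or_mem (i := k - d) (j := k + 4 * d)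
        (g2Root_add_eq_of_even hk₃ hd (by ring) (by ring)) h₃ with hm₁ | h₄
      · exact five {-1, 0, 1, 2, 3} (by decide) (by simp [← sub_eq_add_neg, hm₁, h₀, h₁, h₂, h₃])
      · exact five {0, 1, 2, 3, 4} (by decide) (by simp [h₀, h₁, h₂, h₃, h₄])
  · have hm₂ := h_mid.resolve_right h₂
    have hm₃ := h_right.resolve_right h₂
    rcases h_left with hm₁ | h₃
    · exact five {-3, -2, -1, 0, 1} (by decide)
        (by simp [← sub_eq_add_neg, hm₃, hm₂, hm₁, h₀, h₁])
    · exact five {-3, -2, 0, 1, 3} (by decide) (by simp [← sub_eq_add_neg, hm₃, hm₂, h₀, h₁, h₃])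

theorem five_le_ncard (hS : IsBiclosed rootsG2 S) (hSΔ : S ⊆ rootsG2) (hne : S.Nonempty) :
    5 ≤ S.ncard := by
  obtain ⟨v, hv⟩ := hne
  obtain ⟨k, rfl⟩ : v ∈ Set.range g2Root := range_g2Root ▸ hSΔ hv
  obtain ⟨l, hl, hlS⟩ := hS.exists_odd_g2Root_mem hv
  rcases hS.g2Root_mem_or_mem (g2Root_add_eq_of_odd hl (.inl rfl) rfl rfl) hlS with h | h
  · exact hS.five_le_ncard_of_odd hSΔ hl (.inr rfl) hlS (by rwa [← sub_eq_add_neg])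
  · exact hS.five_le_ncard_of_odd hSΔ hl (.inl rfl) hlS h

end IsBiclosed

theorem Set.ncard_add_ncard_add_ncard_le {α : Type*} {U s t u : Set α} (hU : U.Finite)
    (hs : s ⊆ U) (ht : t ⊆ U) (hu : u ⊆ U)
    (hst : Disjoint s t) (hsu : Disjoint s u) (htu : Disjoint t u) :
    s.ncard + t.ncard + u.ncard ≤ U.ncard := by
  rw [← Set.ncard_union_eq hst (hU.subset hs) (hU.subset ht),
    ← Set.ncard_union_eq (Set.disjoint_union_left.2 ⟨hsu, htu⟩)
      ((hU.subset hs).union (hU.subset ht)) (hU.subset hu)]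
  exact Set.ncard_le_ncard (Set.union_subset (Set.union_subset hs ht) hu) hU

theorem stmt8 (m : ℕ) (hm : 3 ≤ m) :
    ¬ ∃ P : Fin m → Set (Fin 2 → ℤ),
      (⋃ i, P i) = rootsG2 ∧
      (∀ i, (P i).Nonempty) ∧
      (Pairwise fun i j => Disjoint (P i) (P j)) ∧
      (∀ i, RootClosed rootsG2 (P i)) ∧
      (∀ i j, i ≠ j → RootClosed rootsG2 (P i ∪ P j)) := by
  rintro ⟨P, hcov, hne, hdisj, hcl, hcl₂⟩
  have hsub (i : Fin m) : P i ⊆ rootsG2 := hcov ▸ Set.subset_iUnion P i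
  have hfive (i : Fin m) : 5 ≤ (P i).ncard :=
    (isBiclosed_of_iUnion_eq hcov hdisj hcl hcl₂ i).five_le_ncard (hsub i) (hne i)
  let i₀ : Fin m := ⟨0, by omega⟩
  let i₁ : Fin m := ⟨1, by omega⟩
  let i₂ : Fin m := ⟨2, by omega⟩
  have hsum := Set.ncard_add_ncard_add_ncard_le finite_rootsG2 (hsub i₀) (hsub i₁) (hsub i₂)
    (hdisj (by simp [i₀, i₁])) (hdisj (by simp [i₀, i₂])) (hdisj (by simp [i₁, i₂]))
  linarith [hfive i₀, hfive i₁, hfive i₂, ncard_rootsG2]
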